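/- Consider a multi-dimensional knapsack problem with n items having positive real values v_i, positive real weights w_{k,i} (k = 1,…,m), and positive real capacities C_k, with feasible set C := { x ∈ {0,1}^n : Σ_i w_{k,i} x_i ≤ C_k for all k }. Define the edge set E := { (i, j) : i ≠ j, v_i ≤ v_j, w_{k,i} ≥ w_{k,j} for all k, and (if v_i = v_j and w_{k,i} = w_{k,j} for all k, then i < j) }, and let B_n^G := { x ∈ {0,1}^n : for all (i,j) ∈ E, x_i = 1 implies x_j = 1 }. Then max { Σ_i v_i x_i : x ∈ C } = max { Σ_i v_i x_i : x ∈ C ∩ B_n^G } (where both maxima are over nonempty sets, 0 ∈ C ∩ B_n^G). -/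

import Mathlib

open Finset

/-- The set of binary vectors `{0,1}^n`, as real vectors. -/
def Bset (n : ℕ) : Set (Fin n → ℝ) := {x | ∀ i, x i = 0 ∨ x i = 1}

/-- Feasible set of the multi-dimensional knapsack problem:
binary vectors with `∑ i w_{k,i} x_i ≤ C_k` for every `k`. -/
def Kfeas (n m : ℕ) (w : Fin m → Fin n → ℝ) (C : Fin m → ℝ) : Set (Fin n → ℝ) :=
  {x | x ∈ Bset n ∧ ∀ k : Fin m, (∑ i, w k i * x i) ≤ C k}

/-- The order extracted from a multi-dimensional knapsack problem:
`(i,j) ∈ E` iff `i ≠ j`, `v_i ≤ v_j`, `w_{k,i} ≥ w_{k,j}` for all `k`, and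
if the values and all weights coincide then `i < j`. -/
def mkpE (n m : ℕ) (v : Fin n → ℝ) (w : Fin m → Fin n → ℝ) :
    Set (Fin n × Fin n) :=
  {p | p.1 ≠ p.2 ∧ v p.1 ≤ v p.2 ∧ (∀ k : Fin m, w k p.2 ≤ w k p.1) ∧
    ((v p.1 = v p.2 ∧ ∀ k : Fin m, w k p.1 = w k p.2) → p.1 < p.2)}

/-- The subset of `{0,1}^n` ordered by a set `E` of directed edges. -/
def BsetGS (n : ℕ) (E : Set (Fin n × Fin n)) : Set (Fin n → ℝ) :=
  {x | x ∈ Bset n ∧ ∀ e ∈ E, x e.1 = 1 → x e.2 = 1}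

/-!
Among the feasible selections worth at least as much as a given one, take one maximising
`∑ i, rank i * x i`, where `rank j` counts the `E`-predecessors of `j`. If it violated an edge
`(i, j)` (item `i` taken, item `j` not), exchanging `i` for `j` would keep it feasible and no
less valuable, since `j` is at least as valuable and no heavier, while strictly increasing the
potential, because `E` is a strict order. Hence every feasible value is dominated by a value
attained on `C ∩ B_n^G`, and the two suprema agree.
-/

lemma ncard_setOf_lt_of_rel {α : Type*} [Finite α] {r : α → α → Prop}
    (htrans : ∀ ⦃a b c⦄, r a b → r b c → r a c) (hirr : ∀ a, ¬ r a a) {i j : α} (hij : r i j) :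
    {l | r l i}.ncard < {l | r l j}.ncard :=
  Set.ncard_lt_ncard ⟨fun _ hl => htrans hl hij, fun h => hirr i (h hij)⟩

lemma sum_mul_comp_swap {ι R : Type*} [Fintype ι] [DecidableEq ι] [CommRing R] [Nontrivial R]
    (g x : ι → R) {i j : ι}
    (hi : x i = 1) (hj : x j = 0) :
    ∑ l, g l * x (Equiv.swap i j l) = ∑ l, g l * x l + (g j - g i) := by
  have hij : i ≠ j := fun h => one_ne_zero (hi ▸ h ▸ hj)
  rw [← sub_eq_iff_eq_add', ← sum_sub_distrib,
    Fintype.sum_eq_add i j hij fun l hl => by simp [Equiv.swap_apply_of_ne_of_ne hl.1 hl.2]]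
  simp only [Equiv.swap_apply_left, Equiv.swap_apply_right, hi, hj, mul_zero, mul_one, zero_sub,
    sub_zero]
  ring

lemma Bset.finite (n : ℕ) : (Bset n).Finite :=
  Set.Finite.pi' fun _ => Set.toFinite {0, 1}

lemma comp_swap_mem_Bset {n : ℕ} {x : Fin n → ℝ} (hx : x ∈ Bset n) (i j : Fin n) :
    x ∘ Equiv.swap i j ∈ Bset n :=
  fun _ => hx _

section mkpE

variable {n m : ℕ} {v : Fin n → ℝ} {w : Fin m → Fin n → ℝ}

lemma mkpE_trans {l i j : Fin n} (h₁ : (l, i) ∈ mkpE n m v w) (h₂ : (i, j) ∈ mkpE n m v w) :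
    (l, j) ∈ mkpE n m v w := by
  simp only [mkpE, Set.mem_ofPred_eq] at h₁ h₂ ⊢
  obtain ⟨-, hv₁, hw₁, ht₁⟩ := h₁
  obtain ⟨-, hv₂, hw₂, ht₂⟩ := h₂
  have tie : (v l = v j ∧ ∀ k, w k l = w k j) → l < i ∧ i < j := fun ⟨hv, hw⟩ =>
    ⟨ht₁ ⟨le_antisymm hv₁ (hv ▸ hv₂), fun k => le_antisymm (hw k ▸ hw₂ k) (hw₁ k)⟩,
      ht₂ ⟨le_antisymm hv₂ (hv ▸ hv₁), fun k => le_antisymm (hw k ▸ hw₁ k) (hw₂ k)⟩⟩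
  refine ⟨?_, hv₁.trans hv₂, fun k => (hw₂ k).trans (hw₁ k), fun h => (tie h).1.trans (tie h).2⟩
  rintro rfl
  obtain ⟨hli, hil⟩ := tie ⟨rfl, fun _ => rfl⟩
  exact lt_asymm hli hil

variable (v w) in
noncomputable def mkpRank (j : Fin n) : ℕ := {l | (l, j) ∈ mkpE n m v w}.ncard

lemma mkpRank_lt {i j : Fin n} (h : (i, j) ∈ mkpE n m v w) : mkpRank v w i < mkpRank v w j :=
  ncard_setOf_lt_of_rel (r := fun a b => (a, b) ∈ mkpE n m v w) (fun _ _ _ => mkpE_trans)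
    (fun _ h => h.1 rfl) h

lemma exists_mem_BsetGS_value_le (C : Fin m → ℝ) {x : Fin n → ℝ} (hx : x ∈ Kfeas n m w C) :
    ∃ y ∈ Kfeas n m w C ∩ BsetGS n (mkpE n m v w), ∑ i, v i * x i ≤ ∑ i, v i * y i := by
  set S := {y ∈ Kfeas n m w C | ∑ i, v i * x i ≤ ∑ i, v i * y i}
  have hSfin : S.Finite := (Bset.finite n).subset fun y hy => hy.1.1
  obtain ⟨y, ⟨hyK, hxy⟩, hmax⟩ := S.exists_max_image (fun y => ∑ l, (mkpRank v w l : ℝ) * y l)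
    hSfin ⟨x, hx, le_rfl⟩
  refine ⟨y, ⟨hyK, hyK.1, fun ⟨i, j⟩ hij hi => ?_⟩, hxy⟩
  by_contra hj
  have hj : y j = 0 := (hyK.1 j).resolve_right hj
  have hswap : y ∘ Equiv.swap i j ∈ S := by
    refine ⟨⟨comp_swap_mem_Bset hyK.1 i j, fun k => ?_⟩, ?_⟩
    · simp only [Function.comp_apply, sum_mul_comp_swap _ _ hi hj]
      linarith [hyK.2 k, hij.2.2.1 k]
    · simp only [Function.comp_apply, sum_mul_comp_swap _ _ hi hj]
      linarith [hij.2.1]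
  have hrank : (mkpRank v w i : ℝ) < mkpRank v w j := by exact_mod_cast mkpRank_lt hij
  have := hmax _ hswap
  simp only [Function.comp_apply, sum_mul_comp_swap _ _ hi hj] at this
  linarith

end mkpE

theorem stmt17_general (n m : ℕ) (v : Fin n → ℝ) (w : Fin m → Fin n → ℝ) (C : Fin m → ℝ) :
    sSup ((fun x => ∑ i, v i * x i) '' Kfeas n m w C) =
      sSup ((fun x => ∑ i, v i * x i) ''
        (Kfeas n m w C ∩ BsetGS n (mkpE n m v w))) := by
  refine csSup_eq_csSup_of_forall_exists_le ?_ ?_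
  · rintro _ ⟨x, hx, rfl⟩
    obtain ⟨y, hy, hxy⟩ := exists_mem_BsetGS_value_le C hx
    exact ⟨_, ⟨y, hy, rfl⟩, hxy⟩
  · rintro _ ⟨y, hy, rfl⟩
    exact ⟨_, ⟨y, hy.1, rfl⟩, le_rfl⟩

theorem stmt17 (n m : ℕ) (v : Fin n → ℝ) (w : Fin m → Fin n → ℝ) (C : Fin m → ℝ)
    (hv : ∀ i, 0 < v i) (hw : ∀ k i, 0 < w k i) (hC : ∀ k, 0 < C k) :
    sSup ((fun x => ∑ i, v i * x i) '' Kfeas n m w C) =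
      sSup ((fun x => ∑ i, v i * x i) ''
        (Kfeas n m w C ∩ BsetGS n (mkpE n m v w))) :=
  stmt17_general n m v w C
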